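/- Let r ≥ 3, assume r² divides n and that a Steiner system S(2,r,r²) exists. Then there exists a linear r-uniform hypergraph H on an n-element vertex set with r·|E(H)| = (r+1)·n which contains no copy of P_4^r: there are no four distinct hyperedges e_1, e_2, e_3, e_4 of H with e_i ∩ e_{i+1} ≠ ∅ for i = 1, 2, 3 and e_i ∩ e_j = ∅ whenever |i−j| ≥ 2. -/

import Mathlib

/-!
A Steiner system `S(2, r, r²)` is an affine plane of order `r`: each point lies on `r + 1` lines.
If two lines `e₁, e₂` meet in `v` and a line `e₄` misses `e₁`, then the `r` points of `e₄` are
joined to `v` by `r` distinct lines, none of them `e₁`; these are all the lines through `v` other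
than `e₁`, so `e₂` meets `e₄`. Hence the plane contains no linear path `P₄`, and neither does the
disjoint union of `n / r²` copies of it, which is linear, `r`-uniform and has `(r + 1) n / r` edges.
-/

open Finset

namespace Hypergraph

variable {α β ι : Type*}

def IsUniform (E : Finset (Finset α)) (r : ℕ) : Prop := ∀ e ∈ E, #e = r

section

variable [DecidableEq α]

def IsLinear (E : Finset (Finset α)) : Prop := ∀ e ∈ E, ∀ f ∈ E, e ≠ f → #(e ∩ f) ≤ 1

def HasLinearPath4 (E : Finset (Finset α)) : Prop :=
  ∃ e₁ ∈ E, ∃ e₂ ∈ E, ∃ e₃ ∈ E, ∃ e₄ ∈ E,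
    e₁ ≠ e₂ ∧ e₁ ≠ e₃ ∧ e₁ ≠ e₄ ∧ e₂ ≠ e₃ ∧ e₂ ≠ e₄ ∧ e₃ ≠ e₄ ∧
    (e₁ ∩ e₂).Nonempty ∧ (e₂ ∩ e₃).Nonempty ∧ (e₃ ∩ e₄).Nonempty ∧
    e₁ ∩ e₃ = ∅ ∧ e₁ ∩ e₄ = ∅ ∧ e₂ ∩ e₄ = ∅

/-- A linear space in the sense of incidence geometry. -/
def IsLinearSpace (E : Finset (Finset α)) : Prop :=
  ∀ u v : α, u ≠ v → ∃! e, e ∈ E ∧ u ∈ e ∧ v ∈ e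

end

namespace IsLinearSpace

variable [DecidableEq α] {E : Finset (Finset α)} {r : ℕ}

theorem isLinear (hE : IsLinearSpace E) : IsLinear E := by
  intro e he f hf hef
  by_contra! h
  obtain ⟨u, hu, v, hv, huv⟩ := one_lt_card.1 h
  rw [mem_inter] at hu hv
  exact hef ((hE u v huv).unique ⟨he, hu.1, hv.1⟩ ⟨hf, hu.2, hv.2⟩)

theorem card_filter_mem_mul [Fintype α] (hE : IsLinearSpace E) (hu : IsUniform E r) (v : α) :
    #{e ∈ E | v ∈ e} * (r - 1) = Fintype.card α - 1 := by
  have hcount := card_mul_eq_card_mul (fun u e => u ∈ e) (s := univ.erase v) (t := {e ∈ E | v ∈ e})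
    (m := 1) (n := r - 1) ?_ ?_
  · rw [card_erase_of_mem (mem_univ v), card_univ] at hcount
    omega
  · intro u hu
    rw [bipartiteAbove, card_eq_one_iff_existsUnique]
    simpa only [mem_filter, and_assoc, and_comm (a := v ∈ _), and_left_comm (a := v ∈ _)]
      using hE u v (ne_of_mem_erase hu)
  · intro e he
    rw [mem_filter] at he
    have : bipartiteBelow (fun u e => u ∈ e) (univ.erase v) e = e.erase v := by
      ext u; simp [bipartiteBelow, and_comm]
    rw [this, card_erase_of_mem he.2, hu e he.1]

theorem card_filter_mem [Fintype α] (hE : IsLinearSpace E) (hu : IsUniform E r) (hr : 2 ≤ r)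
    (hα : Fintype.card α = r ^ 2) (v : α) : #{e ∈ E | v ∈ e} = r + 1 := by
  have h := hE.card_filter_mem_mul hu v
  rw [hα, ← one_pow 2, Nat.sq_sub_sq, one_pow] at h
  exact Nat.eq_of_mul_eq_mul_right (by omega) h

theorem card_mul [Fintype α] (hE : IsLinearSpace E) (hu : IsUniform E r) (hr : 2 ≤ r)
    (hα : Fintype.card α = r ^ 2) : #E * r = r ^ 2 * (r + 1) := by
  rw [← hα, ← sum_card (hE.card_filter_mem hu hr hα), sum_const_nat hu]

theorem inter_nonempty_of_disjoint (hE : IsLinearSpace E) {e₁ e₂ e₄ : Finset α} {v : α}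
    (he₁ : e₁ ∈ E) (he₂ : e₂ ∈ E) (he₄ : e₄ ∈ E) (hne : e₁ ≠ e₂) (hv₁ : v ∈ e₁) (hv₂ : v ∈ e₂)
    (hdisj : Disjoint e₁ e₄) (hdeg : #{e ∈ E | v ∈ e} ≤ #e₄ + 1) : (e₂ ∩ e₄).Nonempty := by
  by_contra h
  rw [not_nonempty_iff_eq_empty, ← disjoint_iff_inter_eq_empty] at h
  have hv₄ : v ∉ e₄ := disjoint_left.1 hdisj hv₁
  set T := ({e ∈ E | v ∈ e}.erase e₁).erase e₂
  have hT : #T + 2 = #{e ∈ E | v ∈ e} := by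
    have h₁ : e₁ ∈ {e ∈ E | v ∈ e} := mem_filter.2 ⟨he₁, hv₁⟩
    have h₂ : e₂ ∈ {e ∈ E | v ∈ e}.erase e₁ := mem_erase.2 ⟨hne.symm, mem_filter.2 ⟨he₂, hv₂⟩⟩
    rw [← card_erase_add_one h₁, ← card_erase_add_one h₂]
  -- each point of `e₄` is joined to `v` by a block of `T`, and blocks of `T` meet `e₄` at most once
  have : #e₄ ≤ #T := by
    refine card_le_card_of_forall_subsingleton (· ∈ ·) (fun u hu => ?_) (fun b hb => ?_)
    · obtain ⟨b, ⟨hb, hub, hvb⟩, -⟩ := hE u v (ne_of_mem_of_not_mem hu hv₄)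
      refine ⟨b, ?_, hub⟩
      simp only [T, mem_erase, mem_filter]
      exact ⟨fun h' => disjoint_left.1 h (h' ▸ hub) hu,
        fun h' => disjoint_left.1 hdisj (h' ▸ hub) hu, hb, hvb⟩
    · simp only [T, mem_erase, mem_filter] at hb
      have hlin := hE.isLinear b hb.2.2.1 e₄ he₄ (ne_of_mem_of_not_mem' hb.2.2.2 hv₄)
      intro x hx y hy
      exact card_le_one.1 hlin x (mem_inter.2 ⟨hx.2, hx.1⟩) y (mem_inter.2 ⟨hy.2, hy.1⟩)
  omega

theorem not_hasLinearPath4 [Fintype α] (hE : IsLinearSpace E) (hu : IsUniform E r)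
    (hr : 2 ≤ r) (hα : Fintype.card α = r ^ 2) : ¬ HasLinearPath4 E := by
  rintro ⟨e₁, he₁, e₂, he₂, -, -, e₄, he₄, h₁₂, -, -, -, -, -, ⟨v, hv⟩, -, -, -, h₁₄, h₂₄⟩
  rw [mem_inter] at hv
  have h := hE.inter_nonempty_of_disjoint he₁ he₂ he₄ h₁₂ hv.1 hv.2
    (disjoint_iff_inter_eq_empty.2 h₁₄) (by rw [hE.card_filter_mem hu hr hα v, hu e₄ he₄])
  rw [h₂₄] at h
  exact not_nonempty_empty h

end IsLinearSpace

section copies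

variable [DecidableEq α] {E : Finset (Finset α)} {r : ℕ} [Fintype ι] [DecidableEq ι]

variable (ι) in
def copies (E : Finset (Finset α)) : Finset (Finset (α × ι)) :=
  (E ×ˢ univ).image fun p => p.1 ×ˢ {p.2}

theorem mem_copies {f : Finset (α × ι)} : f ∈ copies ι E ↔ ∃ e ∈ E, ∃ i, e ×ˢ {i} = f := by
  simp [copies]

theorem card_copies (hE : ∅ ∉ E) : #(copies ι E) = #E * Fintype.card ι := by
  rw [copies, card_image_of_injOn, card_product, card_univ]
  rintro ⟨e, i⟩ he ⟨f, j⟩ - h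
  obtain ⟨x, hx⟩ := nonempty_iff_ne_empty.2 (ne_of_mem_of_not_mem (mem_product.1 he).1 hE)
  simp only at h
  have hxi : (x, i) ∈ f ×ˢ {j} := h ▸ mem_product.2 ⟨hx, mem_singleton_self i⟩
  obtain ⟨-, rfl⟩ : x ∈ f ∧ j = i := by simpa using hxi
  simpa [product_singleton] using h

theorem IsUniform.copies (h : IsUniform E r) : IsUniform (copies ι E) r := by
  simp only [IsUniform, mem_copies]
  rintro _ ⟨e, he, i, rfl⟩
  rw [card_product, card_singleton, mul_one, h e he]

theorem IsLinear.copies (h : IsLinear E) : IsLinear (copies ι E) := by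
  simp only [IsLinear, mem_copies]
  rintro _ ⟨e, he, i, rfl⟩ _ ⟨f, hf, j, rfl⟩ hne
  rw [product_inter_product, card_product]
  rcases eq_or_ne i j with rfl | hij
  · rw [inter_self, card_singleton, mul_one]
    exact h e he f hf (ne_of_apply_ne (· ×ˢ ({i} : Finset ι)) hne)
  · rw [singleton_inter_of_notMem (by simpa using hij), card_empty, mul_zero]
    exact zero_le_one

theorem HasLinearPath4.of_copies (h : HasLinearPath4 (copies ι E)) : HasLinearPath4 E := by
  obtain ⟨_, h₁, _, h₂, _, h₃, _, h₄, n₁₂, n₁₃, n₁₄, n₂₃, n₂₄, n₃₄, i₁₂, i₂₃, i₃₄, z₁₃, z₁₄, z₂₄⟩ :=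
    h
  obtain ⟨a₁, ha₁, i, rfl⟩ := mem_copies.1 h₁
  obtain ⟨a₂, ha₂, j, rfl⟩ := mem_copies.1 h₂
  obtain ⟨a₃, ha₃, k, rfl⟩ := mem_copies.1 h₃
  obtain ⟨a₄, ha₄, l, rfl⟩ := mem_copies.1 h₄
  simp only [product_inter_product, nonempty_product, product_eq_empty] at i₁₂ i₂₃ i₃₄ z₁₃ z₁₄ z₂₄
  -- the path is connected, so it lies in a single copy
  obtain rfl : i = j := by simpa using not_disjoint_iff_nonempty_inter.2 i₁₂.2
  obtain rfl : i = k := by simpa using not_disjoint_iff_nonempty_inter.2 i₂₃.2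
  obtain rfl : i = l := by simpa using not_disjoint_iff_nonempty_inter.2 i₃₄.2
  simp only [inter_self, singleton_ne_empty, or_false] at z₁₃ z₁₄ z₂₄
  have hinj {a b : Finset α} : a ×ˢ {i} ≠ b ×ˢ ({i} : Finset ι) → a ≠ b :=
    ne_of_apply_ne (· ×ˢ ({i} : Finset ι))
  exact ⟨a₁, ha₁, a₂, ha₂, a₃, ha₃, a₄, ha₄, hinj n₁₂, hinj n₁₃, hinj n₁₄, hinj n₂₃, hinj n₂₄,
    hinj n₃₄, i₁₂.1, i₂₃.1, i₃₄.1, z₁₃, z₁₄, z₂₄⟩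

end copies

section map

variable {E : Finset (Finset α)} {r : ℕ} (φ : α ↪ β)

def map (E : Finset (Finset α)) : Finset (Finset β) := E.map (mapEmbedding φ).toEmbedding

theorem card_map : #(map φ E) = #E := Finset.card_map _

theorem IsUniform.map (h : IsUniform E r) : IsUniform (map φ E) r := by
  simp only [IsUniform, Hypergraph.map, Finset.mem_map]
  rintro _ ⟨e, he, rfl⟩
  simpa using h e he

variable [DecidableEq α] [DecidableEq β]

theorem IsLinear.map (h : IsLinear E) : IsLinear (map φ E) := by
  simp only [IsLinear, Hypergraph.map, Finset.mem_map]
  rintro _ ⟨e, he, rfl⟩ _ ⟨f, hf, rfl⟩ hne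
  simpa [← map_inter] using h e he f hf (ne_of_apply_ne _ hne)

theorem HasLinearPath4.of_map (h : HasLinearPath4 (map φ E)) : HasLinearPath4 E := by
  obtain ⟨_, h₁, _, h₂, _, h₃, _, h₄, n₁₂, n₁₃, n₁₄, n₂₃, n₂₄, n₃₄, i₁₂, i₂₃, i₃₄, z₁₃, z₁₄, z₂₄⟩ :=
    h
  simp only [Hypergraph.map, Finset.mem_map, RelEmbedding.coe_toEmbedding, mapEmbedding_apply]
    at h₁ h₂ h₃ h₄
  obtain ⟨a₁, ha₁, rfl⟩ := h₁
  obtain ⟨a₂, ha₂, rfl⟩ := h₂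
  obtain ⟨a₃, ha₃, rfl⟩ := h₃
  obtain ⟨a₄, ha₄, rfl⟩ := h₄
  simp only [← map_inter, map_nonempty, map_eq_empty, ne_eq, map_inj] at *
  exact ⟨a₁, ha₁, a₂, ha₂, a₃, ha₃, a₄, ha₄, n₁₂, n₁₃, n₁₄, n₂₃, n₂₄, n₃₄, i₁₂, i₂₃, i₃₄, z₁₃,
    z₁₄, z₂₄⟩

end map

end Hypergraph

open Hypergraph in
/-- If r² divides n and a Steiner system S(2,r,r²) exists, then there is a
linear r-uniform hypergraph H on n vertices with r·|E(H)| = (r+1)·n containing no copy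
of the linear path P_4^r. -/
theorem stmt_17 (r n : ℕ) (hr : 3 ≤ r) (hdvd : r ^ 2 ∣ n)
    (hsteiner : ∃ E' : Finset (Finset (Fin (r ^ 2))),
      (∀ e ∈ E', e.card = r) ∧
      (∀ u v : Fin (r ^ 2), u ≠ v → ∃! e, e ∈ E' ∧ u ∈ e ∧ v ∈ e)) :
    ∃ E : Finset (Finset (Fin n)),
      (∀ e ∈ E, e.card = r) ∧
      (∀ e ∈ E, ∀ f ∈ E, e ≠ f → (e ∩ f).card ≤ 1) ∧
      r * E.card = (r + 1) * n ∧
      ¬ ∃ e₁ ∈ E, ∃ e₂ ∈ E, ∃ e₃ ∈ E, ∃ e₄ ∈ E,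
        e₁ ≠ e₂ ∧ e₁ ≠ e₃ ∧ e₁ ≠ e₄ ∧ e₂ ≠ e₃ ∧ e₂ ≠ e₄ ∧ e₃ ≠ e₄ ∧
        (e₁ ∩ e₂).Nonempty ∧ (e₂ ∩ e₃).Nonempty ∧ (e₃ ∩ e₄).Nonempty ∧
        e₁ ∩ e₃ = ∅ ∧ e₁ ∩ e₄ = ∅ ∧ e₂ ∩ e₄ = ∅ := by
  classical
  obtain ⟨S, hSu, hS⟩ := hsteiner
  obtain ⟨m, rfl⟩ := hdvd
  have hSu : IsUniform S r := hSu
  have hS : IsLinearSpace S := hS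
  have hr₂ : 2 ≤ r := by omega
  have hα : Fintype.card (Fin (r ^ 2)) = r ^ 2 := Fintype.card_fin _
  have hS₀ : ∅ ∉ S := fun h => by have := hSu ∅ h; rw [card_empty] at this; omega
  let g : Fin (r ^ 2) × Fin m ↪ Fin (r ^ 2 * m) := finProdFinEquiv.toEmbedding
  refine ⟨map g (copies (Fin m) S), hSu.copies.map g, hS.isLinear.copies.map g, ?_,
    fun h => hS.not_hasLinearPath4 hSu hr₂ hα (HasLinearPath4.of_map g h).of_copies⟩
  rw [Hypergraph.card_map, card_copies hS₀, Fintype.card_fin, ← mul_assoc, mul_comm r,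
    hS.card_mul hSu hr₂ hα]
  ring
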